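/- arXiv:1304.0852 — 4 statements merged into one kernel-verified Lean document; each statement's English description precedes it below -/
import Mathlib

section
/- Every element of G = Sp(V) is conjugate in G to an element of O⁺ or to an element of O⁻: for every g ∈ G there exists h ∈ G such that h g h⁻¹ ∈ O⁺ or h g h⁻¹ ∈ O⁻. -/
set_option synthInstance.maxHeartbeats 1000000
set_option maxHeartbeats 1000000

open scoped BigOperators

/-- The field with `2^f` elements (`q = 2^f`). -/
abbrev Fq (f : ℕ) : Type := GaloisField 2 f

/-- The natural `2m`-dimensional symplectic space over `Fq f`. -/
abbrev V (f m : ℕ) : Type := (Fin m → Fq f) × (Fin m → Fq f)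

/-- The standard nondegenerate alternating bilinear form
`B((x,y),(x',y')) = ∑ i, (x i * y' i + y i * x' i)`. -/
noncomputable def B {f m : ℕ} (u w : V f m) : Fq f :=
  ∑ i, (u.1 i * w.2 i + u.2 i * w.1 i)

/-- The symplectic group `Sp_{2m}(2^f)`: the invertible linear maps preserving `B`. -/
def Sp (f m : ℕ) : Subgroup ((V f m →ₗ[Fq f] V f m)ˣ) where
  carrier := {g | ∀ u w : V f m,
    B ((g : V f m →ₗ[Fq f] V f m) u) ((g : V f m →ₗ[Fq f] V f m) w) = B u w}
  one_mem' := by intro u w; simp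
  mul_mem' := by
    intro g h hg hh u w
    simp only [Units.val_mul, Module.End.mul_apply]
    rw [hg, hh]
  inv_mem' := by
    intro g hg u w
    have := hg (((g⁻¹ : _ˣ) : V f m →ₗ[Fq f] V f m) u)
      (((g⁻¹ : _ˣ) : V f m →ₗ[Fq f] V f m) w)
    simpa [← Module.End.mul_apply, ← Units.val_mul] using this.symm

/-- The natural action of the symplectic group on `V` by matrix multiplication. -/
noncomputable instance {f m : ℕ} : MulAction (Sp f m) (V f m) where
  smul g v := ((g : (V f m →ₗ[Fq f] V f m)ˣ) : V f m →ₗ[Fq f] V f m) v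
  one_smul v := by simp [HSMul.hSMul, SMul.smul]
  mul_smul g h v := by simp [HSMul.hSMul, SMul.smul, Units.val_mul]

/-- The quadratic form of plus type: `Q⁺(x,y) = ∑ i, x i * y i`. -/
noncomputable def Qplus {f m : ℕ} (v : V f m) : Fq f := ∑ i, v.1 i * v.2 i

/-- The quadratic form of minus type:
`Q⁻(x,y) = x 0 ^ 2 + a * y 0 ^ 2 + ∑ i, x i * y i`. -/
noncomputable def Qminus {f m : ℕ} (hm : 0 < m) (a : Fq f) (v : V f m) : Fq f :=
  v.1 ⟨0, hm⟩ ^ 2 + a * v.2 ⟨0, hm⟩ ^ 2 + ∑ i, v.1 i * v.2 i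

/-- The isometry group of a quadratic form `Q` on `V`, as a subgroup of `Sp`. -/
def Ogrp {f m : ℕ} (Q : V f m → Fq f) : Subgroup (Sp f m) where
  carrier := {g | ∀ v : V f m, Q (g • v) = Q v}
  one_mem' := by intro v; rw [one_smul]
  mul_mem' := by intro g h hg hh v; rw [mul_smul, hg, hh]
  inv_mem' := by
    intro g hg v
    conv_rhs => rw [← smul_inv_smul g v]
    rw [hg]

/-- The orthogonal group `O⁺ = O⁺_{2m}(2^f)` of the plus-type form, inside `Sp`. -/
noncomputable def Oplus (f m : ℕ) : Subgroup (Sp f m) := Ogrp Qplus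

/-- The orthogonal group `O⁻ = O⁻_{2m}(2^f)` of the minus-type form, inside `Sp`. -/
noncomputable def Ominus (f m : ℕ) (hm : 0 < m) (a : Fq f) : Subgroup (Sp f m) :=
  Ogrp (Qminus hm a)


/-!
Every `g ∈ Sp(V)` preserves a quadratic form with polar form `B`. Indeed, in characteristic 2 a
quadratic form with zero polar form is the square of a linear functional, so
`Q⁺ ∘ g - Q⁺ = ℓ²`; since `ℓ` vanishes on the fixed vectors of `g`, `ℓ = t ∘ (g - 1)` for some
functional `t`, and `Q⁺ + t²` is `g`-invariant.

Over a finite field of characteristic 2 every quadratic form whose polar form is nondegenerate of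
dimension `2m` has a symplectic basis in which it is `Q⁺` or `Q⁻`: while the dimension is at least 3
there is an isotropic vector, and a hyperbolic plane splits off; an anisotropic plane is of type
`Q⁻` because the Artin–Schreier map `t ↦ t² + t` has kernel `{0, 1}`, so its image has index 2.
The change of basis to such a basis lies in `Sp(V)` and conjugates `g` into `O⁺` or `O⁻`.
-/

open Module

section ArtinSchreier

variable (F : Type*) [Field F] [CharP F 2]

def artinSchreier : F →+ F where
  toFun t := t ^ 2 + t
  map_zero' := by simp
  map_add' s t := by rw [CharTwo.add_sq]; ring

variable {F}

@[simp]
lemma artinSchreier_apply (t : F) : artinSchreier F t = t ^ 2 + t := rfl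

lemma mem_ker_artinSchreier {t : F} : t ∈ (artinSchreier F).ker ↔ t = 0 ∨ t = 1 := by
  rw [AddMonoidHom.mem_ker, artinSchreier_apply, _root_.sq, ← mul_add_one, mul_eq_zero,
    ← CharTwo.sub_eq_add, sub_eq_zero]

lemma card_ker_artinSchreier : Nat.card (artinSchreier F).ker = 2 := by
  have hker : ((artinSchreier F).ker : Set F) = {0, 1} := by
    ext t
    simp only [SetLike.mem_coe, mem_ker_artinSchreier, Set.mem_insert_iff,
      Set.mem_singleton_iff]
  rw [← SetLike.coe_sort_coe, hker, Nat.card_coe_set_eq, Set.ncard_pair zero_ne_one]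

lemma add_mem_range_artinSchreier [Finite F] {a b : F} (ha : a ∉ (artinSchreier F).range)
    (hb : b ∉ (artinSchreier F).range) : a + b ∈ (artinSchreier F).range := by
  have hindex : (artinSchreier F).range.index = 2 := by
    rw [AddSubgroup.index_range, card_ker_artinSchreier]
  exact (AddSubgroup.add_mem_iff_of_index_two hindex).2 (iff_of_false ha hb)

end ArtinSchreier

lemma exists_pow_eq_of_perfectRing {R : Type*} [CommSemiring R] (p : ℕ) [ExpChar R p]
    [PerfectRing R p] (x : R) : ∃ s, s ^ p = x :=
  ⟨_, frobeniusEquiv_symm_pow_p R p x⟩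

namespace QuadraticMap

variable {F W : Type*} [Field F] [AddCommGroup W] [Module F W] {Q : QuadraticForm F W}

lemma polar_self_eq_zero [CharP F 2] (Q : QuadraticForm F W) (x : W) : polar Q x x = 0 := by
  rw [polar_self, two_nsmul, CharTwo.add_self_eq_zero]

lemma exists_polar_eq_one (hQ : Q.polarBilin.SeparatingLeft) {v : W} (hv : v ≠ 0) :
    ∃ w, polar Q v w = 1 := by
  obtain ⟨w, hw⟩ : ∃ w, polar Q v w ≠ 0 := by
    by_contra! h
    exact hv (hQ v h)
  exact ⟨(polar Q v w)⁻¹ • w, by rw [polar_smul_right, smul_eq_mul, inv_mul_cancel₀ hw]⟩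

lemma exists_polar_eq_one_and_eq_zero [CharP F 2] (hQ : Q.polarBilin.SeparatingLeft) {u : W}
    (hu : u ≠ 0) (hQu : Q u = 0) : ∃ w, polar Q u w = 1 ∧ Q w = 0 := by
  obtain ⟨w, hw⟩ := exists_polar_eq_one hQ hu
  refine ⟨w + Q w • u, ?_, ?_⟩
  · rw [polar_add_right, polar_smul_right, polar_self_eq_zero, smul_zero, add_zero, hw]
  · rw [QuadraticMap.map_add (⇑Q), QuadraticMap.map_smul, hQu, smul_zero, add_zero,
      polar_smul_right, polar_comm, hw, smul_eq_mul, mul_one, CharTwo.add_self_eq_zero]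

lemma exists_ne_zero_apply_eq_zero [CharP F 2] [PerfectRing F 2] [FiniteDimensional F W]
    (Q : QuadraticForm F W) (hW : 3 ≤ finrank F W) : ∃ u ≠ 0, Q u = 0 := by
  have : Nontrivial W := Module.nontrivial_of_finrank_pos (R := F) (by omega)
  obtain ⟨v, hv⟩ := exists_ne (0 : W)
  by_cases hQv : Q v = 0
  · exact ⟨v, hv, hQv⟩
  -- the orthogonal of `v` has dimension at least 2, so it is not contained in `F ∙ v`
  obtain ⟨v', hv'v, hv'⟩ : ∃ v' ∈ LinearMap.ker (Q.polarBilin v), v' ∉ F ∙ v := by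
    by_contra! h
    have h1 := Submodule.finrank_mono h
    have h2 := LinearMap.finrank_range_add_finrank_ker (Q.polarBilin v)
    have h3 := Submodule.finrank_le (LinearMap.range (Q.polarBilin v))
    rw [finrank_span_singleton hv] at h1
    rw [finrank_self] at h3
    omega
  obtain ⟨s, hs⟩ := exists_pow_eq_of_perfectRing 2 (Q v')
  obtain ⟨t, ht⟩ := exists_pow_eq_of_perfectRing 2 (Q v)
  have ht0 : t ≠ 0 := by
    rintro rfl
    exact hQv (by rw [← ht]; ring)
  refine ⟨s • v + t • v', fun h0 => hv' ?_, ?_⟩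
  · refine Submodule.mem_span_singleton.2 ⟨-(t⁻¹ * s), ?_⟩
    rw [neg_smul, mul_smul, ← smul_neg, ← eq_neg_of_add_eq_zero_right h0, smul_smul,
      inv_mul_cancel₀ ht0, one_smul]
  · have h0 : polar Q v v' = 0 := hv'v
    rw [QuadraticMap.map_add (⇑Q), QuadraticMap.map_smul, QuadraticMap.map_smul, polar_smul_left,
      polar_smul_right, h0, ← hs, ← ht, smul_eq_mul, smul_eq_mul, smul_zero, smul_zero]
    linear_combination (s ^ 2 * t ^ 2) * CharTwo.two_eq_zero (R := F)

lemma exists_polar_eq_one_of_anisotropic [CharP F 2] [Finite F] [Nontrivial W]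
    (hQ : Q.polarBilin.SeparatingLeft) (hQa : Q.Anisotropic) {a : F}
    (ha : a ∉ (artinSchreier F).range) : ∃ e f, polar Q e f = 1 ∧ Q e = 1 ∧ Q f = a := by
  obtain ⟨v, hv⟩ := exists_ne (0 : W)
  have hQv : Q v ≠ 0 := fun h => hv (hQa v h)
  obtain ⟨s, hs⟩ := exists_pow_eq_of_perfectRing 2 (Q v)
  have hs0 : s ≠ 0 := by
    rintro rfl
    exact hQv (by rw [← hs]; ring)
  set e := s⁻¹ • v
  have hQe : Q e = 1 := by
    rw [QuadraticMap.map_smul, ← hs, smul_eq_mul]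
    field_simp
  obtain ⟨f₀, hf₀⟩ := exists_polar_eq_one hQ (show e ≠ 0 by rintro h; simp [h] at hQe)
  have hQf₀t (t : F) : Q (f₀ + t • e) = Q f₀ + artinSchreier F t := by
    rw [QuadraticMap.map_add (⇑Q), QuadraticMap.map_smul, hQe, polar_smul_right, polar_comm, hf₀,
      artinSchreier_apply, smul_eq_mul, smul_eq_mul]
    ring
  -- `Q (f₀ + t • e) ≠ 0` for every `t`, because `polar Q e (f₀ + t • e) = 1`
  have hf₀a : Q f₀ ∉ (artinSchreier F).range := by
    rintro ⟨t, ht⟩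
    have h0 : f₀ + t • e = 0 := hQa _ (by rw [hQf₀t, ht, CharTwo.add_self_eq_zero])
    have h1 : polar Q e (f₀ + t • e) = 1 := by
      rw [polar_add_right, polar_smul_right, polar_self_eq_zero, smul_zero, add_zero, hf₀]
    simp [h0] at h1
  obtain ⟨t, ht⟩ := add_mem_range_artinSchreier ha hf₀a
  refine ⟨e, f₀ + t • e, ?_, hQe, ?_⟩
  · rw [polar_add_right, polar_smul_right, polar_self_eq_zero, smul_zero, add_zero, hf₀]
  · rw [hQf₀t, ht, add_left_comm, CharTwo.add_self_eq_zero, add_zero]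

def orthogonalPair (Q : QuadraticForm F W) (u w : W) : Submodule F W :=
  LinearMap.ker ((Q.polarBilin u).prod (Q.polarBilin w))

lemma mem_orthogonalPair {u w x : W} :
    x ∈ orthogonalPair Q u w ↔ polar Q u x = 0 ∧ polar Q w x = 0 := by
  simp [orthogonalPair]

section HyperbolicPair

variable {u w : W} (hu : Q u = 0) (hw : Q w = 0) (huw : polar Q u w = 1)
include hu hw huw

lemma sub_sub_mem_orthogonalPair (z : W) :
    z - polar Q w z • u - polar Q u z • w ∈ orthogonalPair Q u w := by
  have hwu : polar Q w u = 1 := by rw [polar_comm, huw]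
  rw [mem_orthogonalPair, polar_sub_right, polar_sub_right, polar_sub_right, polar_sub_right,
    polar_smul_right, polar_smul_right, polar_smul_right, polar_smul_right, polar_self, polar_self,
    hu, hw, huw, hwu]
  simp

lemma finrank_orthogonalPair_add_two [FiniteDimensional F W] :
    finrank F (orthogonalPair Q u w) + 2 = finrank F W := by
  have hwu : polar Q w u = 1 := by rw [polar_comm, huw]
  have hsurj : Function.Surjective ((Q.polarBilin u).prod (Q.polarBilin w)) := by
    rintro ⟨α, β⟩
    refine ⟨α • w + β • u, ?_⟩
    simp [polar_add_right, polar_smul_right, polar_self, hu, hw, huw, hwu]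
  have h := LinearMap.finrank_range_add_finrank_ker ((Q.polarBilin u).prod (Q.polarBilin w))
  rw [LinearMap.range_eq_top.2 hsurj, finrank_top, finrank_prod, finrank_self] at h
  rw [orthogonalPair]
  omega

lemma separatingLeft_polarBilin_comp_subtype (hQ : Q.polarBilin.SeparatingLeft) :
    (Q.comp (orthogonalPair Q u w).subtype).polarBilin.SeparatingLeft := by
  rintro ⟨x, hx⟩ h
  rw [mem_orthogonalPair] at hx
  refine Subtype.ext (hQ x fun z => ?_)
  have h0 : polar Q x (z - polar Q w z • u - polar Q u z • w) = 0 :=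
    h ⟨_, sub_sub_mem_orthogonalPair hu hw huw z⟩
  rw [polar_sub_right, polar_sub_right, polar_smul_right, polar_smul_right, polar_comm _ x u,
    polar_comm _ x w, hx.1, hx.2, smul_zero, smul_zero, sub_zero, sub_zero] at h0
  exact h0

end HyperbolicPair

end QuadraticMap

section NormalBasis

open QuadraticMap

variable {F W : Type*} [Field F] [AddCommGroup W] [Module F W]

structure IsSymplecticFamily {ι : Type*} [DecidableEq ι] (Q : QuadraticForm F W)
    (e f : ι → W) : Prop where
  polar_e_e : ∀ i j, polar Q (e i) (e j) = 0
  polar_f_f : ∀ i j, polar Q (f i) (f j) = 0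
  polar_e_f : ∀ i j, polar Q (e i) (f j) = if i = j then 1 else 0

lemma IsSymplecticFamily.polar_f_e {ι : Type*} [DecidableEq ι] {Q : QuadraticForm F W}
    {e f : ι → W} (h : IsSymplecticFamily Q e f) (i j : ι) :
    polar Q (f i) (e j) = if j = i then 1 else 0 := by
  rw [polar_comm, h.polar_e_f]

/-- A symplectic basis in whose coordinates `Q` reads `c x₀² + d y₀² + ∑ xᵢ yᵢ`. -/
structure IsNormalBasis (Q : QuadraticForm F W) (c d : F) {m : ℕ} (e f : Fin m → W) : Prop
    extends IsSymplecticFamily Q e f where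
  apply_e : ∀ i, Q (e i) = if (i : ℕ) = 0 then c else 0
  apply_f : ∀ i, Q (f i) = if (i : ℕ) = 0 then d else 0

variable {Q : QuadraticForm F W}

lemma isNormalBasis_fin_one [CharP F 2] {e f : W} (hef : polar Q e f = 1) :
    IsNormalBasis Q (Q e) (Q f) (fun _ : Fin 1 => e) (fun _ => f) where
  polar_e_e _ _ := polar_self_eq_zero Q e
  polar_f_f _ _ := polar_self_eq_zero Q f
  polar_e_f i j := by simp [Subsingleton.elim i j, hef]
  apply_e i := by simp
  apply_f i := by simp

lemma IsNormalBasis.of_comp_subtype {p : Submodule F W} {c d : F} {m : ℕ} {e f : Fin m → p}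
    (h : IsNormalBasis (Q.comp p.subtype) c d e f) :
    IsNormalBasis Q c d (fun i => (e i : W)) (fun i => (f i : W)) :=
  ⟨⟨h.polar_e_e, h.polar_f_f, h.polar_e_f⟩, h.apply_e, h.apply_f⟩

lemma IsNormalBasis.snoc {u w : W} (hu : Q u = 0) (hw : Q w = 0) (huw : polar Q u w = 1)
    {c d : F} {n : ℕ} {e f : Fin (n + 1) → orthogonalPair Q u w}
    (h : IsNormalBasis (Q.comp (orthogonalPair Q u w).subtype) c d e f) :
    IsNormalBasis Q c d (Fin.snoc (fun i => (e i : W)) u) (Fin.snoc (fun i => (f i : W)) w) := by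
  have hK (x : orthogonalPair Q u w) :
      polar Q u x = 0 ∧ polar Q x u = 0 ∧ polar Q w x = 0 ∧ polar Q x w = 0 := by
    obtain ⟨hux, hwx⟩ := mem_orthogonalPair.1 x.2
    exact ⟨hux, by rw [polar_comm, hux], hwx, by rw [polar_comm, hwx]⟩
  have h' := h.of_comp_subtype
  refine ⟨⟨fun i j => ?_, fun i j => ?_, fun i j => ?_⟩, fun i => ?_, fun i => ?_⟩ <;>
    induction i using Fin.lastCases <;> try induction j using Fin.lastCases
  all_goals simp [polar_self, hu, hw, huw, hK, h'.polar_e_e, h'.polar_f_f, h'.polar_e_f,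
    h'.apply_e, h'.apply_f, Fin.castSucc_ne_last, (Fin.castSucc_ne_last _).symm]

variable [CharP F 2] [Finite F] {a : F}

lemma exists_isNormalBasis_fin_one [Nontrivial W] (hQ : Q.polarBilin.SeparatingLeft)
    (ha : a ∉ (artinSchreier F).range) :
    ∃ (c d : F) (e f : Fin 1 → W), (c = 0 ∧ d = 0 ∨ c = 1 ∧ d = a) ∧ IsNormalBasis Q c d e f := by
  by_cases hQa : Q.Anisotropic
  · obtain ⟨e, f, hef, hQe, hQf⟩ := exists_polar_eq_one_of_anisotropic hQ hQa ha
    exact ⟨_, _, _, _, Or.inr ⟨hQe, hQf⟩, isNormalBasis_fin_one hef⟩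
  · obtain ⟨u, hQu, hu⟩ : ∃ u, Q u = 0 ∧ u ≠ 0 := by
      simpa [Anisotropic] using hQa
    obtain ⟨w, huw, hQw⟩ := exists_polar_eq_one_and_eq_zero hQ hu hQu
    exact ⟨_, _, _, _, Or.inl ⟨hQu, hQw⟩, isNormalBasis_fin_one huw⟩

universe u in
theorem exists_isNormalBasis (ha : a ∉ (artinSchreier F).range) :
    ∀ (m : ℕ) {W : Type u} [AddCommGroup W] [Module F W] [FiniteDimensional F W]
      (Q : QuadraticForm F W), Q.polarBilin.SeparatingLeft → finrank F W = 2 * m →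
      ∃ (c d : F) (e f : Fin m → W), (c = 0 ∧ d = 0 ∨ c = 1 ∧ d = a) ∧ IsNormalBasis Q c d e f
  | 0, _, _, _, _, _, _, _ =>
    ⟨0, 0, finZeroElim, finZeroElim, Or.inl ⟨rfl, rfl⟩,
      ⟨⟨finZeroElim, finZeroElim, finZeroElim⟩, finZeroElim, finZeroElim⟩⟩
  | 1, W, _, _, _, _, hQ, hW => by
    have : Nontrivial W := Module.nontrivial_of_finrank_pos (R := F) (by omega)
    exact exists_isNormalBasis_fin_one hQ ha
  | m + 2, W, _, _, _, Q, hQ, hW => by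
    obtain ⟨u, hu, hQu⟩ := exists_ne_zero_apply_eq_zero Q (by omega)
    obtain ⟨w, huw, hQw⟩ := exists_polar_eq_one_and_eq_zero hQ hu hQu
    have hdim := finrank_orthogonalPair_add_two hQu hQw huw
    obtain ⟨c, d, e, f, hcd, h⟩ := exists_isNormalBasis ha (m + 1)
      (Q.comp (orthogonalPair Q u w).subtype)
      (separatingLeft_polarBilin_comp_subtype hQu hQw huw hQ) (by omega)
    exact ⟨c, d, _, _, hcd, h.snoc hQu hQw huw⟩

end NormalBasis

namespace QuadraticMap

variable {R M N ι : Type*} [CommRing R] [AddCommGroup M] [Module R M] [AddCommGroup N] [Module R N]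

lemma map_sum_of_polar_eq_zero [Fintype ι] (Q : QuadraticMap R M N) {v : ι → M}
    (hv : ∀ i j, i ≠ j → polar Q (v i) (v j) = 0) : Q (∑ i, v i) = ∑ i, Q (v i) := by
  classical
  rw [Q.map_sum, add_eq_left]
  refine Finset.sum_eq_zero fun ij hij => ?_
  induction ij using Sym2.ind with
  | h i j => simpa using hv i j (by simpa using hij)

end QuadraticMap

section Coordinates

variable (F : Type*) {W ι : Type*} [Field F] [AddCommGroup W] [Module F W] [Fintype ι]

noncomputable def pairCombination (e f : ι → W) : (ι → F) × (ι → F) →ₗ[F] W :=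
  (Fintype.linearCombination F e).coprod (Fintype.linearCombination F f)

variable {F}

lemma pairCombination_apply (e f : ι → W) (p : (ι → F) × (ι → F)) :
    pairCombination F e f p = ∑ i, (p.1 i • e i + p.2 i • f i) := by
  simp [pairCombination, Fintype.linearCombination_apply, Finset.sum_add_distrib]

open QuadraticMap

variable [DecidableEq ι] {Q : QuadraticForm F W} {e f : ι → W}

lemma IsSymplecticFamily.polar_pairCombination (h : IsSymplecticFamily Q e f)
    (p q : (ι → F) × (ι → F)) :
    polar Q (pairCombination F e f p) (pairCombination F e f q) =
      ∑ i, (p.1 i * q.2 i + p.2 i * q.1 i) := by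
  simp only [pairCombination_apply, ← polarBilin_apply_apply, map_sum, map_add, map_smul,
    LinearMap.sum_apply, LinearMap.add_apply, LinearMap.smul_apply, smul_eq_mul]
  simp [h.polar_e_e, h.polar_f_f, h.polar_e_f, h.polar_f_e, Finset.sum_add_distrib, mul_comm,
    add_comm]

lemma IsSymplecticFamily.apply_pairCombination (h : IsSymplecticFamily Q e f)
    (p : (ι → F) × (ι → F)) :
    Q (pairCombination F e f p) =
      ∑ i, (Q (e i) * p.1 i ^ 2 + Q (f i) * p.2 i ^ 2 + p.1 i * p.2 i) := by
  rw [pairCombination_apply, map_sum_of_polar_eq_zero]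
  · refine Finset.sum_congr rfl fun i _ => ?_
    rw [QuadraticMap.map_add (⇑Q), QuadraticMap.map_smul, QuadraticMap.map_smul, polar_smul_left,
      polar_smul_right, h.polar_e_f, if_pos rfl]
    simp only [smul_eq_mul]
    ring
  · intro i j hij
    simp [polar_add_left, polar_add_right, polar_smul_left, polar_smul_right, h.polar_e_e,
      h.polar_f_f, h.polar_e_f, h.polar_f_e, hij, Ne.symm hij]

lemma IsNormalBasis.apply_pairCombination {m : ℕ} {c d : F} {e f : Fin m → W}
    (h : IsNormalBasis Q c d e f) (hm : 0 < m) (p : (Fin m → F) × (Fin m → F)) :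
    Q (pairCombination F e f p) =
      c * p.1 ⟨0, hm⟩ ^ 2 + d * p.2 ⟨0, hm⟩ ^ 2 + ∑ i, p.1 i * p.2 i := by
  have h0 (i : Fin m) : (i : ℕ) = 0 ↔ i = ⟨0, hm⟩ := by simp [Fin.ext_iff]
  rw [h.toIsSymplecticFamily.apply_pairCombination]
  simp [h.apply_e, h.apply_f, h0, Finset.sum_add_distrib, ite_mul]

end Coordinates

namespace QuadraticMap

variable {F W : Type*} [Field F] [CharP F 2] [PerfectRing F 2] [AddCommGroup W] [Module F W]

lemma exists_dual_sq_eq_of_polar_eq_zero (Q : QuadraticForm F W) (hQ : ∀ x y, polar Q x y = 0) :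
    ∃ ℓ : Dual F W, ∀ x, ℓ x ^ 2 = Q x := by
  refine ⟨{ toFun := fun x => (frobeniusEquiv F 2).symm (Q x)
            map_add' := fun x y => ?_
            map_smul' := fun t x => ?_ }, fun x => frobeniusEquiv_symm_pow_p F 2 (Q x)⟩
  · rw [QuadraticMap.map_add (⇑Q), hQ, add_zero, map_add]
  · rw [QuadraticMap.map_smul, smul_eq_mul, ← _root_.sq, map_mul, frobeniusEquiv_symm_pow,
      RingHom.id_apply, smul_eq_mul]

theorem exists_invariant_of_polar_invariant [FiniteDimensional F W] (Q : QuadraticForm F W)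
    (G : W →ₗ[F] W) (hG : ∀ x y, polar Q (G x) (G y) = polar Q x y) :
    ∃ Q' : QuadraticForm F W, polar Q' = polar Q ∧ ∀ v, Q' (G v) = Q' v := by
  obtain ⟨ℓ, hℓ⟩ := exists_dual_sq_eq_of_polar_eq_zero (Q.comp G - Q) fun x y => by
    have := hG x y
    simp only [polar, map_add, sub_apply, comp_apply] at this ⊢
    linear_combination this
  have hℓ_mem : ℓ ∈ LinearMap.range (G - LinearMap.id).dualMap := by
    rw [LinearMap.range_dualMap_eq_dualAnnihilator_ker, Submodule.mem_dualAnnihilator]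
    intro v hv
    have hGv : G v = v := sub_eq_zero.1 hv
    exact pow_eq_zero_iff two_ne_zero |>.1 (by rw [hℓ v, sub_apply, comp_apply, hGv, sub_self])
  obtain ⟨t, ht⟩ := hℓ_mem
  have htG (v : W) : t (G v) = t v + ℓ v := by
    rw [← ht]
    simp
  refine ⟨Q + linMulLin t t, funext₂ fun x y => ?_, fun v => ?_⟩
  · simp only [polar, add_apply, linMulLin_apply, map_add]
    linear_combination (t x * t y) * CharTwo.two_eq_zero (R := F)
  · have := hℓ v
    simp only [sub_apply, comp_apply] at this
    simp only [add_apply, linMulLin_apply, htG]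
    linear_combination this + (Q (G v) + t v * ℓ v - Q v) * CharTwo.two_eq_zero (R := F)

end QuadraticMap

section Symplectic

open QuadraticMap

variable {f m : ℕ}

lemma eq_zero_of_forall_B_eq_zero {v : V f m} (h : ∀ w, B v w = 0) : v = 0 := by
  ext j
  · simpa [B, Pi.single_apply] using h (0, Pi.single j 1)
  · simpa [B, Pi.single_apply] using h (Pi.single j 1, 0)

lemma finrank_V : finrank (Fq f) (V f m) = 2 * m := by
  simp [finrank_prod, two_mul]

noncomputable def qplus (f m : ℕ) : QuadraticForm (Fq f) (V f m) :=
  LinearMap.BilinMap.toQuadraticMap <| (dotProductBilin (Fq f) (Fq f)).compl₁₂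
    (LinearMap.fst (Fq f) (Fin m → Fq f) (Fin m → Fq f))
    (LinearMap.snd (Fq f) (Fin m → Fq f) (Fin m → Fq f))

lemma polar_qplus (u w : V f m) : polar (qplus f m) u w = B u w := by
  simp [qplus, LinearMap.BilinMap.polar_toQuadraticMap, B, dotProduct, Finset.sum_add_distrib,
    mul_comm]

lemma isUnit_of_B_map_map {φ : V f m →ₗ[Fq f] V f m} (hφ : ∀ u w, B (φ u) (φ w) = B u w) :
    IsUnit φ := by
  rw [LinearMap.isUnit_iff_ker_eq_bot, LinearMap.ker_eq_bot']
  exact fun v hv => eq_zero_of_forall_B_eq_zero fun w => by rw [← hφ, hv]; simp [B]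

noncomputable def Sp.ofIsometry (φ : V f m →ₗ[Fq f] V f m) (hφ : ∀ u w, B (φ u) (φ w) = B u w) :
    Sp f m :=
  ⟨(isUnit_of_B_map_map hφ).unit, hφ⟩

lemma inv_mul_mul_mem_Ogrp {Q : V f m → Fq f} {g : Sp f m} (hg : g ∈ Ogrp Q) (h : Sp f m) :
    h⁻¹ * g * h ∈ Ogrp fun v => Q (h • v) := fun v => by
  simp only [mul_smul, smul_inv_smul]
  exact hg (h • v)

theorem exists_quadraticForm_polar_eq_B_mem_Ogrp (g : Sp f m) :
    ∃ Q : QuadraticForm (Fq f) (V f m), (∀ u w, polar Q u w = B u w) ∧ g ∈ Ogrp Q := by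
  obtain ⟨Q, hQ, hgQ⟩ := exists_invariant_of_polar_invariant (qplus f m)
    ((g : (V f m →ₗ[Fq f] V f m)ˣ) : V f m →ₗ[Fq f] V f m)
    fun x y => by rw [polar_qplus, polar_qplus]; exact g.2 x y
  exact ⟨Q, fun u w => by rw [hQ, polar_qplus], hgQ⟩

end Symplectic

theorem conjugate_mem_orthogonal_plus_or_minus_general
    (f m : ℕ) (hm : 0 < m) (a : Fq f)
    (ha : ∀ α : Fq f, α ^ 2 + α ≠ a) (g : Sp f m) :
    ∃ h : Sp f m, h * g * h⁻¹ ∈ Oplus f m ∨ h * g * h⁻¹ ∈ Ominus f m hm a := by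
  obtain ⟨Q, hQB, hgQ⟩ := exists_quadraticForm_polar_eq_B_mem_Ogrp g
  have hQ : Q.polarBilin.SeparatingLeft := fun v hv =>
    eq_zero_of_forall_B_eq_zero fun w => (hQB v w).symm.trans (hv w)
  obtain ⟨c, d, e, e', hcd, he⟩ :=
    exists_isNormalBasis (fun ⟨α, hα⟩ => ha α hα) m Q hQ finrank_V
  let S := Sp.ofIsometry (pairCombination (Fq f) e e') fun p q => by
    rw [← hQB, he.polar_pairCombination]
    rfl
  have hQS : (fun v => Q (S • v)) = fun v => c * v.1 ⟨0, hm⟩ ^ 2 + d * v.2 ⟨0, hm⟩ ^ 2 + Qplus v :=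
    funext (he.apply_pairCombination hm)
  have hconj := inv_mul_mul_mem_Ogrp hgQ S
  rw [hQS] at hconj
  refine ⟨S⁻¹, ?_⟩
  rw [inv_inv]
  rcases hcd with ⟨rfl, rfl⟩ | ⟨rfl, rfl⟩
  · left
    simp only [zero_mul, zero_add] at hconj
    exact hconj
  · right
    simp only [one_mul] at hconj
    exact hconj

/-- Every element of `Sp_{2m}(2^f)` is conjugate to an element of `O⁺_{2m}(2^f)` or of
`O⁻_{2m}(2^f)`. -/
theorem conjugate_mem_orthogonal_plus_or_minus
    (f m : ℕ) (hf : 1 ≤ f) (hm : 0 < m) (a : Fq f)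
    (ha : ∀ α : Fq f, α ^ 2 + α ≠ a) (g : Sp f m) :
    ∃ h : Sp f m, h * g * h⁻¹ ∈ Oplus f m ∨ h * g * h⁻¹ ∈ Ominus f m hm a :=
  conjugate_mem_orthogonal_plus_or_minus_general f m hm a ha g
end

section
/- Assume m ≥ 2. Let v ∈ V with v ≠ 0 and let G_v = {g ∈ G : g v = v} be its stabilizer in G = Sp(V). Then two nonzero vectors u, u' ∈ V lie in the same G_v-orbit if and only if all of the following hold: B(v,u) = B(v,u'); u lies in the line F·v if and only if u' does; and if u ∈ F·v then u = u'. (In particular the G_v-orbits on V∖{0} are: the q−1 singletons {λv} for λ ∈ F∖{0}, the set v^⊥∖(F·v), and the q−1 sets {u : B(v,u) = λ} for λ ∈ F∖{0}.) -/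
set_option synthInstance.maxHeartbeats 1000000
set_option maxHeartbeats 1000000

open scoped BigOperators

/-!
The transvections `x ↦ x + c B(x, w) w` with `w ∈ v^⊥` are isometries fixing `v`, and when
`B(a, b) ≠ 0` the transvection along `b - a` with `c = B(a, b)⁻¹` sends `a` to `b`; if moreover
`B(v, a) = B(v, b)`, then `b - a ∈ v^⊥`. So two vectors off the line `F·v` with the same value of
`B(v, ·)` are joined by one such transvection when `B(u, u') ≠ 0`, and by two, passing through
`u + w`, when `B(u, u') = 0`: here `w ∈ v^⊥` is chosen with `B(u, w) ≠ 0 ≠ B(u', w)`, which exists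
because by nondegeneracy neither `u^⊥` nor `u'^⊥` contains `v^⊥`, and a space is not the union of
two proper subspaces.
-/

namespace LinearMap.BilinForm

section Transvection

variable {R M : Type*} [CommRing R] [AddCommGroup M] [Module R M] (β : LinearMap.BilinForm R M)

def transvection (w : M) (c : R) : M →ₗ[R] M :=
  LinearMap.id + (c • β.flip w).smulRight w

variable {β}

theorem transvection_apply (w : M) (c : R) (x : M) :
    β.transvection w c x = x + (c * β x w) • w := rfl

theorem transvection_apply_of_apply_eq_zero {w x : M} (c : R) (h : β x w = 0) :
    β.transvection w c x = x := by
  rw [transvection_apply, h, mul_zero, zero_smul, add_zero]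

@[simp]
theorem transvection_zero (w : M) : β.transvection w 0 = LinearMap.id := by
  ext x
  simp [transvection_apply]

theorem transvection_mul_transvection (hβ : β.IsAlt) (w : M) (c d : R) :
    β.transvection w c * β.transvection w d = β.transvection w (c + d) := by
  ext x
  simp only [Module.End.mul_apply, transvection_apply, map_add, map_smul, hβ.self_eq_zero,
    mul_zero]
  module

theorem apply_transvection_transvection (hβ : β.IsAlt) (w : M) (c : R) (x y : M) :
    β (β.transvection w c x) (β.transvection w c y) = β x y := by
  simp only [transvection_apply, map_add, map_smul, LinearMap.add_apply, LinearMap.smul_apply,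
    hβ.self_eq_zero, smul_eq_mul, mul_zero, add_zero, ← hβ.neg_eq w y]
  ring

end Transvection

section Field

variable {K M : Type*} [Field K] [AddCommGroup M] [Module K M] {β : LinearMap.BilinForm K M}

theorem transvection_sub_apply_self (hβ : β.IsAlt) {a b : M} (h : β a b ≠ 0) :
    β.transvection (b - a) (β a b)⁻¹ a = b := by
  rw [transvection_apply, map_sub, hβ.self_eq_zero, sub_zero, inv_mul_cancel₀ h, one_smul,
    add_sub_cancel]

theorem exists_apply_eq_zero_apply_ne_zero (hβ : β.SeparatingLeft) {v u : M}
    (hu : u ∉ K ∙ v) : ∃ w, β v w = 0 ∧ β u w ≠ 0 := by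
  by_contra! h
  have hker : ⨅ _ : Unit, LinearMap.ker (β v) ≤ LinearMap.ker (β u) := fun w hw => by
    simp only [iInf_const, LinearMap.mem_ker] at hw ⊢
    exact h w hw
  obtain ⟨c, hc⟩ := Submodule.mem_span_singleton.mp
    (by simpa using mem_span_of_iInf_ker_le_ker hker)
  refine hu (Submodule.mem_span_singleton.mpr ⟨c, Eq.symm (sub_eq_zero.mp (hβ _ fun w => ?_))⟩)
  simp [← hc]

theorem exists_apply_eq_zero_apply_ne_zero_apply_ne_zero (hβ : β.SeparatingLeft) {v u u' : M}
    (hu : u ∉ K ∙ v) (hu' : u' ∉ K ∙ v) : ∃ w, β v w = 0 ∧ β u w ≠ 0 ∧ β u' w ≠ 0 := by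
  obtain ⟨w₁, hv₁, hu₁⟩ := exists_apply_eq_zero_apply_ne_zero hβ hu
  obtain ⟨w₂, hv₂, hu₂⟩ := exists_apply_eq_zero_apply_ne_zero hβ hu'
  by_cases h₁ : β u' w₁ = 0
  · by_cases h₂ : β u w₂ = 0
    · exact ⟨w₁ + w₂, by simp [hv₁, hv₂], by simpa [h₂] using hu₁, by simpa [h₁] using hu₂⟩
    · exact ⟨w₂, hv₂, h₂, hu₂⟩
  · exact ⟨w₁, hv₁, hu₁, h₁⟩

theorem exists_transvection_transvection_apply_eq (hβ : β.IsAlt) (hβ' : β.SeparatingLeft)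
    {v u u' : M} (hvu : β v u = β v u') (hu : u ∉ K ∙ v) (hu' : u' ∉ K ∙ v) :
    ∃ w₁ w₂ : M, ∃ c₁ c₂ : K, β v w₁ = 0 ∧ β v w₂ = 0 ∧
      β.transvection w₂ c₂ (β.transvection w₁ c₁ u) = u' := by
  by_cases huu' : β u u' = 0
  · obtain ⟨w, hvw, huw, hu'w⟩ := exists_apply_eq_zero_apply_ne_zero_apply_ne_zero hβ' hu hu'
    have h₁ : β u (u + w) ≠ 0 := by simpa [hβ.self_eq_zero] using huw
    have h₂ : β (u + w) u' ≠ 0 := by simpa [huu', ← hβ.neg_eq u' w] using hu'w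
    have step₁ := transvection_sub_apply_self hβ h₁
    rw [add_sub_cancel_left] at step₁
    refine ⟨w, u' - (u + w), (β u (u + w))⁻¹, (β (u + w) u')⁻¹, hvw, ?_,
      by rw [step₁, transvection_sub_apply_self hβ h₂]⟩
    simp [hvw, hvu]
  · refine ⟨0, u' - u, 0, (β u u')⁻¹, by simp, by simp [hvu], ?_⟩
    simpa using transvection_sub_apply_self hβ huu'

end Field

end LinearMap.BilinForm

open LinearMap.BilinForm

noncomputable def Bform (f m : ℕ) : LinearMap.BilinForm (Fq f) (V f m) :=
  LinearMap.mk₂ (Fq f) B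
    (fun x y w => by simp only [B, ← Finset.sum_add_distrib]; congr! 1; simp; ring)
    (fun a x w => by simp only [B, smul_eq_mul, Finset.mul_sum]; congr! 1; simp; ring)
    (fun x y w => by simp only [B, ← Finset.sum_add_distrib]; congr! 1; simp; ring)
    (fun a x w => by simp only [B, smul_eq_mul, Finset.mul_sum]; congr! 1; simp; ring)

theorem Bform_apply {f m : ℕ} (x y : V f m) : Bform f m x y = B x y := rfl

theorem Bform_isAlt (f m : ℕ) : (Bform f m).IsAlt := fun x => by
  simp [Bform_apply, B, mul_comm (x.2 _), CharTwo.add_self_eq_zero]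

theorem Bform_separatingLeft (f m : ℕ) : (Bform f m).SeparatingLeft := fun x hx => by
  ext j
  · simpa [Bform_apply, B, Pi.single_apply] using hx (0, Pi.single j 1)
  · simpa [Bform_apply, B, Pi.single_apply] using hx (Pi.single j 1, 0)

namespace Sp

variable {f m : ℕ}

theorem smul_def (g : Sp f m) (x : V f m) :
    g • x = ((g : (V f m →ₗ[Fq f] V f m)ˣ) : V f m →ₗ[Fq f] V f m) x := rfl

theorem B_smul_smul (g : Sp f m) (x y : V f m) : B (g • x) (g • y) = B x y := g.2 x y

theorem smul_eq_self_of_mem_span {g : Sp f m} {v u : V f m} (hg : g • v = v)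
    (hu : u ∈ Fq f ∙ v) : g • u = u := by
  obtain ⟨a, rfl⟩ := Submodule.mem_span_singleton.mp hu
  rw [smul_def, map_smul, ← smul_def, hg]

theorem smul_mem_span_iff {g : Sp f m} {v u : V f m} (hg : g • v = v) :
    g • u ∈ Fq f ∙ v ↔ u ∈ Fq f ∙ v := by
  refine ⟨fun h => ?_, fun h => by rwa [smul_eq_self_of_mem_span hg h]⟩
  have hg' : g⁻¹ • v = v := inv_smul_eq_iff.mpr hg.symm
  rwa [← smul_eq_self_of_mem_span hg' h, inv_smul_smul] at h

noncomputable def transvection (w : V f m) (c : Fq f) : Sp f m where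
  val :=
    { val := (Bform f m).transvection w c
      inv := (Bform f m).transvection w (-c)
      val_inv := by rw [transvection_mul_transvection (Bform_isAlt f m), add_neg_cancel,
        transvection_zero]; rfl
      inv_val := by rw [transvection_mul_transvection (Bform_isAlt f m), neg_add_cancel,
        transvection_zero]; rfl }
  property := apply_transvection_transvection (Bform_isAlt f m) w c

theorem transvection_smul (w : V f m) (c : Fq f) (x : V f m) :
    transvection w c • x = (Bform f m).transvection w c x := rfl

end Sp

theorem stabilizer_orbit_criterion_general
    (f m : ℕ) (v : V f m) (u u' : V f m) :
    (∃ g : Sp f m, g • v = v ∧ g • u = u') ↔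
      (B v u = B v u' ∧
        (u ∈ Submodule.span (Fq f) {v} ↔ u' ∈ Submodule.span (Fq f) {v}) ∧
        (u ∈ Submodule.span (Fq f) {v} → u = u')) := by
  constructor
  · rintro ⟨g, hgv, rfl⟩
    exact ⟨by rw [← Sp.B_smul_smul g, hgv], (Sp.smul_mem_span_iff hgv).symm,
      fun hu => (Sp.smul_eq_self_of_mem_span hgv hu).symm⟩
  · rintro ⟨hvu, hspan, heq⟩
    by_cases hu : u ∈ Fq f ∙ v
    · exact ⟨1, one_smul _ _, by rw [one_smul, heq hu]⟩
    obtain ⟨w₁, w₂, c₁, c₂, hvw₁, hvw₂, hu'⟩ := exists_transvection_transvection_apply_eq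
      (Bform_isAlt f m) (Bform_separatingLeft f m) hvu hu (hspan.not.mp hu)
    refine ⟨Sp.transvection w₂ c₂ * Sp.transvection w₁ c₁, ?_, by rwa [mul_smul]⟩
    rw [mul_smul, Sp.transvection_smul, Sp.transvection_smul,
      transvection_apply_of_apply_eq_zero _ hvw₁, transvection_apply_of_apply_eq_zero _ hvw₂]

/-- Orbit criterion for the stabilizer `G_v` of a nonzero vector `v` in `Sp_{2m}(2^f)` (`m ≥ 2`):
two nonzero vectors `u, u'` lie in the same `G_v`-orbit if and only if `B v u = B v u'`,
`u` lies on the line `F·v` iff `u'` does, and if `u ∈ F·v` then `u = u'`. -/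
theorem stabilizer_orbit_criterion
    (f m : ℕ) (hf : 1 ≤ f) (hm : 2 ≤ m)
    (v : V f m) (hv : v ≠ 0) (u u' : V f m) (hu : u ≠ 0) (hu' : u' ≠ 0) :
    (∃ g : Sp f m, g • v = v ∧ g • u = u') ↔
      (B v u = B v u' ∧
        (u ∈ Submodule.span (Fq f) {v} ↔ u' ∈ Submodule.span (Fq f) {v}) ∧
        (u ∈ Submodule.span (Fq f) {v} → u = u')) :=
  stabilizer_orbit_criterion_general f m v u u'
end

section
/- Assume m ≥ 2. Let Γ be the simple graph whose vertices are the 1-dimensional F-subspaces of V, with two distinct subspaces W, W' adjacent if and only if B(w, w') = 0 for all w ∈ W and w' ∈ W'. Then Γ is strongly regular with parameters ( (q^(2m)−1)/(q−1), (q^(2m−1)−q)/(q−1), (q^(2m−2)−1)/(q−1) − 2, (q^(2m−2)−1)/(q−1) ). -/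
set_option synthInstance.maxHeartbeats 1000000
set_option maxHeartbeats 1000000

open scoped BigOperators

lemma B_comm {f m : ℕ} (u w : V f m) : B u w = B w u :=
  Finset.sum_congr rfl fun i _ => by ring

/-- The graph on the `1`-dimensional subspaces of `V`, two distinct subspaces being adjacent
when they are orthogonal with respect to `B`. -/
noncomputable def perpGraph (f m : ℕ) :
    SimpleGraph {W : Submodule (Fq f) (V f m) // Module.finrank (Fq f) W = 1} where
  Adj W W' := W ≠ W' ∧
    ∀ w ∈ (W : Submodule (Fq f) (V f m)), ∀ w' ∈ (W' : Submodule (Fq f) (V f m)), B w w' = 0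
  symm := ⟨by
    rintro W W' ⟨hne, h⟩
    exact ⟨hne.symm, fun w hw w' hw' => (B_comm w w').trans (h w' hw' w hw)⟩⟩
  loopless := ⟨fun W h => h.1 rfl⟩

noncomputable instance (f m : ℕ) :
    Fintype {W : Submodule (Fq f) (V f m) // Module.finrank (Fq f) W = 1} :=
  Fintype.ofFinite _

/-!
The argument works for any nondegenerate alternating form on an `n`-dimensional space over
`𝔽_q`. Since the form is alternating, every point `W` lies on its orthogonal `W^⊥`, a hyperplane;
so the neighbours of `W` are the points of `W^⊥` other than `W`. Two distinct points `W`, `W'`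
span a plane, whose orthogonal `W^⊥ ∩ W'^⊥` has codimension `2`; its points are the common
neighbours of `W` and `W'`, together with `W` and `W'` themselves exactly when these are adjacent.
A subspace of dimension `k` contains `(q^k - 1)/(q - 1)` points.
-/

open Module
open LinearMap (BilinForm)

namespace Submodule

variable {K M : Type*} [Field K] [AddCommGroup M] [Module K M]

theorem finrank_sup_eq_two_of_ne {W W' : {W : Submodule K M // finrank K W = 1}} (h : W ≠ W') :
    finrank K (W.1 ⊔ W'.1 : Submodule K M) = 2 := by
  have : FiniteDimensional K W.1 := .of_finrank_eq_succ W.2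
  have : FiniteDimensional K W'.1 := .of_finrank_eq_succ W'.2
  have hinf : finrank K (W.1 ⊓ W'.1 : Submodule K M) = 0 := by
    by_contra hne
    have hW : W.1 ⊓ W'.1 = W.1 := eq_of_le_of_finrank_le inf_le_left (by omega)
    have hW' : W.1 ⊓ W'.1 = W'.1 := eq_of_le_of_finrank_le inf_le_right (by omega)
    exact h (Subtype.ext (hW.symm.trans hW'))
  have := finrank_sup_add_finrank_inf_eq W.1 W'.1
  omega

theorem ncard_lines_le [Finite K] [Module.Finite K M] (S : Submodule K M) :
    {U : {W : Submodule K M // finrank K W = 1} | U.1 ≤ S}.ncard =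
      (Nat.card K ^ finrank K S - 1) / (Nat.card K - 1) := by
  let e : {U : {W : Submodule K M // finrank K W = 1} | U.1 ≤ S} ≃
      {H : Submodule K S // finrank K H = 1} :=
    { toFun U := ⟨U.1.1.comap S.subtype, by
        rw [← finrank_map_subtype_eq, map_comap_subtype,
          inf_eq_right.2 U.2, U.1.2]⟩
      invFun H := ⟨⟨H.1.map S.subtype, by rw [finrank_map_subtype_eq, H.2]⟩,
        map_subtype_le _ _⟩
      left_inv U := by
        ext1; ext1
        exact (map_comap_subtype _ _).trans (inf_eq_right.2 U.2)
      right_inv H := Subtype.ext (comap_map_eq_of_injective S.injective_subtype _) }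
  rw [← Nat.card_coe_set_eq, Nat.card_congr e,
    ← Nat.card_congr (Projectivization.equivSubmodule K S), Projectivization.card'',
    Module.natCard_eq_pow_finrank (K := K)]

end Submodule

namespace LinearMap.BilinForm

theorem orthogonal_sup {R N : Type*} [CommSemiring R] [AddCommMonoid N] [Module R N]
    (β : BilinForm R N) (P Q : Submodule R N) :
    β.orthogonal (P ⊔ Q) = β.orthogonal P ⊓ β.orthogonal Q := by
  refine le_antisymm (le_inf (orthogonal_le le_sup_left) (orthogonal_le le_sup_right)) ?_
  rintro x ⟨hP, hQ⟩ z hz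
  obtain ⟨y, hy, y', hy', rfl⟩ := Submodule.mem_sup.1 hz
  rw [map_add, LinearMap.add_apply, hP y hy, hQ y' hy', add_zero]

variable {K M : Type*} [Field K] [AddCommGroup M] [Module K M]

theorem IsAlt.le_orthogonal_self {β : BilinForm K M} (hβ : β.IsAlt)
    (W : {W : Submodule K M // finrank K W = 1}) : W.1 ≤ β.orthogonal W.1 := by
  obtain ⟨v, -, hv⟩ := finrank_eq_one_iff'.1 W.2
  have hspan : ∀ x ∈ W.1, ∃ a : K, a • (v : M) = x := fun x hx =>
    (hv ⟨x, hx⟩).imp fun _ ha => congrArg Subtype.val ha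
  intro x hx y hy
  obtain ⟨a, rfl⟩ := hspan x hx
  obtain ⟨b, rfl⟩ := hspan y hy
  simp [hβ.self_eq_zero]

def orthogonalityGraph (β : BilinForm K M) (hβ : β.IsRefl) :
    SimpleGraph {W : Submodule K M // finrank K W = 1} where
  Adj W W' := W ≠ W' ∧ W'.1 ≤ β.orthogonal W.1
  symm := ⟨fun _ _ h => ⟨h.1.symm, fun x hx _ hy => hβ _ _ (h.2 hy x hx)⟩⟩
  loopless := ⟨fun _ h => h.1 rfl⟩

section

variable {β : BilinForm K M} {hβ : β.IsRefl}

theorem neighborSet_orthogonalityGraph (W : {W : Submodule K M // finrank K W = 1}) :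
    (β.orthogonalityGraph hβ).neighborSet W = {U | U.1 ≤ β.orthogonal W.1} \ {W} := by
  ext U
  simp only [SimpleGraph.mem_neighborSet, orthogonalityGraph, Set.mem_sdiff, Set.mem_ofPred_eq,
    Set.mem_singleton_iff]
  tauto

theorem commonNeighbors_orthogonalityGraph (W W' : {W : Submodule K M // finrank K W = 1}) :
    (β.orthogonalityGraph hβ).commonNeighbors W W' =
      {U | U.1 ≤ β.orthogonal (W.1 ⊔ W'.1)} \ {W, W'} := by
  ext U
  simp only [SimpleGraph.mem_commonNeighbors, orthogonalityGraph, orthogonal_sup, le_inf_iff,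
    Set.mem_sdiff, Set.mem_ofPred_eq, Set.mem_insert_iff, Set.mem_singleton_iff]
  tauto

end

theorem isSRGWith_orthogonalityGraph [Finite K] [FiniteDimensional K M] {β : BilinForm K M}
    (hβ : β.IsAlt) (hnd : β.Nondegenerate)
    [Fintype {W : Submodule K M // finrank K W = 1}]
    [DecidableRel (β.orthogonalityGraph hβ.isRefl).Adj] :
    (β.orthogonalityGraph hβ.isRefl).IsSRGWith
      ((Nat.card K ^ finrank K M - 1) / (Nat.card K - 1))
      ((Nat.card K ^ (finrank K M - 1) - Nat.card K) / (Nat.card K - 1))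
      ((Nat.card K ^ (finrank K M - 2) - 1) / (Nat.card K - 1) - 2)
      ((Nat.card K ^ (finrank K M - 2) - 1) / (Nat.card K - 1)) where
  card := by
    rw [Fintype.card_eq_nat_card, ← Set.ncard_univ, ← finrank_top K M,
      ← Submodule.ncard_lines_le]
    simp
  regular W := by
    have hq : 0 < Nat.card K := Nat.card_pos
    rw [← SimpleGraph.card_neighborSet_eq_degree, Fintype.card_eq_nat_card, Nat.card_coe_set_eq,
      neighborSet_orthogonalityGraph, Set.ncard_sdiff_singleton_of_mem (hβ.le_orthogonal_self W),
      Submodule.ncard_lines_le, finrank_orthogonal hnd, W.2, ← Nat.sub_mul_div, mul_one]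
    congr 1
    omega
  of_adj W W' h := by
    have hmem : ({W, W'} : Set _) ⊆ {U | U.1 ≤ β.orthogonal (W.1 ⊔ W'.1)} := by
      simp only [Set.pair_subset_iff, Set.mem_ofPred_eq, orthogonal_sup, le_inf_iff]
      exact ⟨⟨hβ.le_orthogonal_self W, h.symm.2⟩, h.2, hβ.le_orthogonal_self W'⟩
    rw [Fintype.card_eq_nat_card, Nat.card_coe_set_eq, commonNeighbors_orthogonalityGraph,
      Set.ncard_sdiff hmem, Set.ncard_pair h.1, Submodule.ncard_lines_le, finrank_orthogonal hnd,
      Submodule.finrank_sup_eq_two_of_ne h.1]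
  of_not_adj W W' hne hnadj := by
    have hdisj : Disjoint ({W, W'} : Set _) {U | U.1 ≤ β.orthogonal (W.1 ⊔ W'.1)} := by
      simp only [Set.disjoint_insert_left, Set.disjoint_singleton_left, Set.mem_ofPred_eq,
        orthogonal_sup, le_inf_iff, not_and]
      exact ⟨fun _ hW => hnadj (SimpleGraph.Adj.symm ⟨hne.symm, hW⟩),
        fun hW' _ => hnadj ⟨hne, hW'⟩⟩
    rw [Fintype.card_eq_nat_card, Nat.card_coe_set_eq, commonNeighbors_orthogonalityGraph,
      sdiff_eq_left.2 hdisj.symm, Submodule.ncard_lines_le, finrank_orthogonal hnd,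
      Submodule.finrank_sup_eq_two_of_ne hne]

end LinearMap.BilinForm

noncomputable def symplecticForm (f m : ℕ) : BilinForm (Fq f) (V f m) :=
  LinearMap.mk₂ (Fq f) B
    (fun _ _ _ => by
      simp only [B, ← Finset.sum_add_distrib]
      exact Finset.sum_congr rfl fun _ _ => by
        simp only [Prod.fst_add, Prod.snd_add, Pi.add_apply]; ring)
    (fun _ _ _ => by
      simp only [B, smul_eq_mul, Finset.mul_sum]
      exact Finset.sum_congr rfl fun _ _ => by
        simp only [Prod.smul_fst, Prod.smul_snd, Pi.smul_apply, smul_eq_mul]; ring)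
    (fun _ _ _ => by
      simp only [B, ← Finset.sum_add_distrib]
      exact Finset.sum_congr rfl fun _ _ => by
        simp only [Prod.fst_add, Prod.snd_add, Pi.add_apply]; ring)
    (fun _ _ _ => by
      simp only [B, smul_eq_mul, Finset.mul_sum]
      exact Finset.sum_congr rfl fun _ _ => by
        simp only [Prod.smul_fst, Prod.smul_snd, Pi.smul_apply, smul_eq_mul]; ring)

theorem symplecticForm_apply {f m : ℕ} (u w : V f m) : symplecticForm f m u w = B u w := rfl

theorem symplecticForm_isAlt (f m : ℕ) : (symplecticForm f m).IsAlt := fun u =>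
  show B u u = 0 from Finset.sum_eq_zero fun _ _ => by
    rw [mul_comm]; exact CharTwo.add_self_eq_zero _

theorem symplecticForm_nondegenerate (f m : ℕ) : (symplecticForm f m).Nondegenerate := by
  refine (symplecticForm_isAlt f m).isRefl.nondegenerate_iff_separatingLeft.2 fun ⟨x, y⟩ h => ?_
  have hx : ∀ i, x i = 0 := fun i => by
    simpa [symplecticForm_apply, B, Pi.single_apply] using h (0, Pi.single i 1)
  have hy : ∀ i, y i = 0 := fun i => by
    simpa [symplecticForm_apply, B, Pi.single_apply] using h (Pi.single i 1, 0)
  ext i <;> simp [hx, hy]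

theorem perpGraph_eq_orthogonalityGraph (f m : ℕ) :
    perpGraph f m = (symplecticForm f m).orthogonalityGraph (symplecticForm_isAlt f m).isRefl := by
  ext W W'
  exact and_congr_right fun _ => forall₂_comm

theorem perpGraph_isSRG_general (f m : ℕ) (hf : 1 ≤ f) :
    letI : DecidableRel (perpGraph f m).Adj := Classical.decRel _
    (perpGraph f m).IsSRGWith
      (((2 ^ f) ^ (2 * m) - 1) / (2 ^ f - 1))
      (((2 ^ f) ^ (2 * m - 1) - 2 ^ f) / (2 ^ f - 1))
      (((2 ^ f) ^ (2 * m - 2) - 1) / (2 ^ f - 1) - 2)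
      (((2 ^ f) ^ (2 * m - 2) - 1) / (2 ^ f - 1)) := by
  have hq : Nat.card (Fq f) = 2 ^ f := GaloisField.card 2 f (by omega)
  have hn : Module.finrank (Fq f) (V f m) = 2 * m := by
    rw [Module.finrank_prod, Module.finrank_fin_fun]
    ring
  rw [perpGraph_eq_orthogonalityGraph, ← hq, ← hn]
  classical
  exact LinearMap.BilinForm.isSRGWith_orthogonalityGraph (symplecticForm_isAlt f m)
    (symplecticForm_nondegenerate f m)

/-- The orthogonality graph on `1`-subspaces of the natural module of `Sp_{2m}(2^f)` is
strongly regular with parameters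
`((q^{2m}-1)/(q-1), (q^{2m-1}-q)/(q-1), (q^{2m-2}-1)/(q-1) - 2, (q^{2m-2}-1)/(q-1))`,
where `q = 2^f`. -/
theorem perpGraph_isSRG (f m : ℕ) (hf : 1 ≤ f) (hm : 2 ≤ m) :
    letI : DecidableRel (perpGraph f m).Adj := Classical.decRel _
    (perpGraph f m).IsSRGWith
      (((2 ^ f) ^ (2 * m) - 1) / (2 ^ f - 1))
      (((2 ^ f) ^ (2 * m - 1) - 2 ^ f) / (2 ^ f - 1))
      (((2 ^ f) ^ (2 * m - 2) - 1) / (2 ^ f - 1) - 2)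
      (((2 ^ f) ^ (2 * m - 2) - 1) / (2 ^ f - 1)) :=
  perpGraph_isSRG_general f m hf
end

section
/- Assume m ≥ 2, and let Q : V → F be any quadratic form whose polar form is B (i.e., Q(u+w) + Q(u) + Q(w) = B(u,w) for all u, w ∈ V), with isometry group O(Q) = {g ∈ GL(V) : Q(g v) = Q(v) for all v ∈ V}. Then two nonzero vectors u, u' ∈ V lie in the same O(Q)-orbit if and only if Q(u) = Q(u'); consequently O(Q) has exactly q orbits on V∖{0}, namely the level sets {v ∈ V∖{0} : Q(v) = λ} for λ ∈ F. -/
set_option synthInstance.maxHeartbeats 1000000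
set_option maxHeartbeats 1000000

open scoped BigOperators

/-!
In characteristic 2 the polar form `B` of `Q` is alternating, and two kinds of isometries suffice:
reflections `x ↦ x + Q(a)⁻¹ B(x,a) a` in anisotropic vectors and Eichler transformations
`x ↦ x + B(x,z) a + (B(x,a) + Q(a) B(x,z)) z` (for `z` isotropic, `B(z,a) = 0`). Let `Q u = Q u'`.
If `B(u,u') ≠ 0`, the reflection in `u + u'` maps `u` to `u'`. Otherwise `z = u + u'` is isotropic
and orthogonal to `u`, and an Eichler transformation along `z` maps `u` to `u'`, unless `u` is a
multiple of `z`; then `u` is isotropic, `u'` is a multiple of `u`, and two reflections through an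
isotropic `v` with `B(u,v) = 1` do it.

Such partners `v` exist because `m ≥ 2`: some hyperbolic pair `e, e'` is orthogonal to a `d`
with `B(u,d) = 1`, and over the perfect field `F` the plane `d + ⟨e, e'⟩` (moved into `uᗮ`)
contains an isotropic vector. Chaining two partners also shows that `Q` takes every value on
nonzero vectors, so the `q` nonzero level sets are exactly the orbits.
-/

theorem CharTwo.exists_binary_quadratic_eq_zero {K : Type*} [Field K] [CharP K 2]
    [PerfectRing K 2] (a b p r k : K) :
    ∃ s t, a * s ^ 2 + b * t ^ 2 + s * t + p * s + r * t + k = 0 := by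
  -- With `t = p` the terms `s * t + p * s` cancel; if `a = 0`, `t = p + 1` makes it linear in `s`.
  rcases eq_or_ne a 0 with rfl | ha
  · refine ⟨b * (p + 1) ^ 2 + r * (p + 1) + k, p + 1, ?_⟩
    linear_combination
      (b * (p + 1) ^ 2 + r * (p + 1) + k) * (p + 1) * CharTwo.two_eq_zero (R := K)
  · obtain ⟨s, hs⟩ := surjective_frobenius K 2 (a⁻¹ * (b * p ^ 2 + r * p + k))
    rw [frobenius_def] at hs
    have has : a * s ^ 2 = b * p ^ 2 + r * p + k := by rw [hs, mul_inv_cancel_left₀ ha]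
    refine ⟨s, p, ?_⟩
    linear_combination has + (s * p + b * p ^ 2 + r * p + k) * CharTwo.two_eq_zero (R := K)

namespace QuadraticMap

variable {K M : Type*} [Field K] [AddCommGroup M] [Module K M] (Q : QuadraticForm K M)

theorem map_add_smul (x y : M) (c : K) :
    Q (x + c • y) = Q x + c ^ 2 * Q y + c * polar Q x y := by
  rw [QuadraticMap.map_add Q, QuadraticMap.map_smul, polar_smul_right, smul_eq_mul, smul_eq_mul]
  ring

theorem inv_smul_polarBilin_self {a : M} (ha : Q a ≠ 0) :
    ((Q a)⁻¹ • polarBilin Q a) a = 2 := by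
  simp only [LinearMap.smul_apply, polarBilin_apply_apply, polar_self, nsmul_eq_mul,
    Nat.cast_ofNat, smul_eq_mul]
  field_simp

def reflection (a : M) (ha : Q a ≠ 0) : Q.IsometryEquiv Q where
  toLinearEquiv := Module.reflection (inv_smul_polarBilin_self Q ha)
  map_app' x := by
    change Q (Module.reflection _ x) = Q x
    rw [Module.reflection_apply, sub_eq_add_neg, ← neg_smul, map_add_smul]
    simp only [LinearMap.smul_apply, polarBilin_apply_apply, smul_eq_mul, polar_comm Q x]
    field_simp
    ring

theorem reflection_apply (a : M) (ha : Q a ≠ 0) (x : M) :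
    reflection Q a ha x = x - ((Q a)⁻¹ * polar Q a x) • a :=
  Module.reflection_apply x (inv_smul_polarBilin_self Q ha)

def eichlerMap (z a : M) : M →ₗ[K] M :=
  LinearMap.id + (polarBilin Q z).smulRight a -
    (polarBilin Q a + Q a • polarBilin Q z).smulRight z

theorem eichlerMap_apply (z a x : M) :
    eichlerMap Q z a x = x + polar Q z x • a - (polar Q a x + Q a * polar Q z x) • z := by
  simp [eichlerMap]

variable {Q}

theorem eichlerMap_neg_eichlerMap {z a : M} (hz : Q z = 0) (hza : polar Q z a = 0) (x : M) :
    eichlerMap Q z (-a) (eichlerMap Q z a x) = x := by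
  have hzz : polar Q z z = 0 := by simp [polar_self, hz]
  have haa : polar Q a a = 2 * Q a := by simp [polar_self]
  simp only [eichlerMap_apply, polar_add_right, polar_sub_right, polar_smul_right, polar_neg_left,
    QuadraticMap.map_neg, smul_eq_mul, hzz, haa, polar_comm Q a z, hza]
  module

theorem map_eichlerMap {z a : M} (hz : Q z = 0) (hza : polar Q z a = 0) (x : M) :
    Q (eichlerMap Q z a x) = Q x := by
  rw [eichlerMap_apply, sub_eq_add_neg, ← neg_smul, map_add_smul, map_add_smul, hz]
  simp only [polar_add_left, polar_smul_left, smul_eq_mul, polar_comm Q a z, hza, polar_comm Q x]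
  ring

def eichler (z a : M) (hz : Q z = 0) (hza : polar Q z a = 0) : Q.IsometryEquiv Q where
  toLinearEquiv := LinearEquiv.ofLinearMap (eichlerMap Q z a) (eichlerMap Q z (-a))
    (LinearMap.ext fun x => by
      simpa using eichlerMap_neg_eichlerMap (a := -a) hz (by simpa using hza) x)
    (LinearMap.ext fun x => eichlerMap_neg_eichlerMap hz hza x)
  map_app' := map_eichlerMap hz hza

theorem eichler_apply (z a : M) (hz : Q z = 0) (hza : polar Q z a = 0) (x : M) :
    eichler z a hz hza x = x + polar Q z x • a - (polar Q a x + Q a * polar Q z x) • z :=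
  eichlerMap_apply Q z a x

theorem map_sub_eq_add_sub_polar (x y : M) : Q (x - y) = Q x + Q y - polar Q x y := by
  rw [sub_eq_add_neg, QuadraticMap.map_add Q, QuadraticMap.map_neg, polar_neg_right]; ring

theorem exists_isometryEquiv_apply_eq_of_map_sub_ne_zero {u u' : M} (h : Q u = Q u')
    (h' : Q (u - u') ≠ 0) : ∃ g : Q.IsometryEquiv Q, g u = u' := by
  refine ⟨reflection Q (u - u') h', ?_⟩
  have : polar Q (u - u') u = Q (u - u') := by
    rw [polar_sub_left, polar_self, map_sub_eq_add_sub_polar, polar_comm, nsmul_eq_mul]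
    linear_combination h
  rw [reflection_apply, this, inv_mul_cancel₀ h', one_smul, sub_sub_cancel]

theorem exists_isometryEquiv_apply_eq_of_isotropic_sub {u u' a : M} (hz : Q (u - u') = 0)
    (hzu : polar Q (u - u') u = 0) (hza : polar Q (u - u') a = 0) (hau : polar Q a u = 1) :
    ∃ g : Q.IsometryEquiv Q, g u = u' :=
  ⟨eichler _ a hz hza, by rw [eichler_apply, hzu, hau]; simp⟩

theorem exists_isometryEquiv_apply_eq_smul {u v : M} (hu : Q u = 0) (hv : Q v = 0)
    (huv : polar Q u v = 1) {c : K} (hc : c ≠ 0) : ∃ g : Q.IsometryEquiv Q, g u = c • u := by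
  obtain ⟨g₁, hg₁⟩ :=
      exists_isometryEquiv_apply_eq_of_map_sub_ne_zero (hu.trans hv.symm) <| by
    simp [map_sub_eq_add_sub_polar, hu, hv, huv]
  obtain ⟨g₂, hg₂⟩ := exists_isometryEquiv_apply_eq_of_map_sub_ne_zero (u := v)
    (u' := c • u) (by rw [QuadraticMap.map_smul, hu, hv, smul_zero]) <| by
      rw [map_sub_eq_add_sub_polar, polar_smul_right, polar_comm, huv, QuadraticMap.map_smul, hu,
        hv]
      simpa using hc
  exact ⟨g₁.trans g₂, (congrArg g₂ hg₁).trans hg₂⟩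

theorem separatingLeft_polarBilin_of_forall_exists_polar_eq_one
    (hiso : ∀ u ≠ 0, ∃ v, Q v = 0 ∧ polar Q u v = 1) : (polarBilin Q).SeparatingLeft := by
  intro u hu
  by_contra h
  obtain ⟨v, -, hv⟩ := hiso u h
  simp [← polarBilin_apply_apply, hu v] at hv

theorem exists_eq_smul_of_ker_polar_le (hQ : (polarBilin Q).SeparatingLeft) {u z : M}
    (h : ∀ a, polar Q z a = 0 → polar Q u a = 0) : ∃ c : K, u = c • z := by
  have := mem_span_of_iInf_ker_le_ker (L := fun _ : Unit => polarBilin Q z)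
    (K := polarBilin Q u) fun a => by simpa using h a
  rw [Set.range_const, Submodule.mem_span_singleton] at this
  obtain ⟨c, hc⟩ := this
  rw [← map_smul] at hc
  exact ⟨c, LinearMap.ker_eq_bot.mp (LinearMap.separatingLeft_iff_ker_eq_bot.mp hQ) hc.symm⟩

theorem exists_isometryEquiv_apply_eq [CharP K 2]
    (hiso : ∀ u ≠ 0, ∃ v, Q v = 0 ∧ polar Q u v = 1) {u u' : M} (hu : u ≠ 0)
    (hu' : u' ≠ 0) (h : Q u = Q u') : ∃ g : Q.IsometryEquiv Q, g u = u' := by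
  rcases ne_or_eq (polar Q u u') 0 with hp | hp
  · refine exists_isometryEquiv_apply_eq_of_map_sub_ne_zero h ?_
    rwa [map_sub_eq_add_sub_polar, h, ← two_mul, CharTwo.two_eq_zero, zero_mul, zero_sub,
      neg_ne_zero]
  have hz : Q (u - u') = 0 := by
    rw [map_sub_eq_add_sub_polar, h, hp, ← two_mul, CharTwo.two_eq_zero, zero_mul, sub_zero]
  have hzu : polar Q (u - u') u = 0 := by
    rw [polar_sub_left, polar_self, polar_comm, hp, nsmul_eq_mul, Nat.cast_ofNat,
      CharTwo.two_eq_zero, zero_mul, sub_zero]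
  by_cases hA : ∃ a, polar Q (u - u') a = 0 ∧ polar Q a u ≠ 0
  · obtain ⟨a, hza, hau⟩ := hA
    refine exists_isometryEquiv_apply_eq_of_isotropic_sub hz hzu (a := (polar Q a u)⁻¹ • a)
      ?_ ?_
    · rw [polar_smul_right, hza, smul_zero]
    · rw [polar_smul_left, smul_eq_mul, inv_mul_cancel₀ hau]
  push Not at hA
  -- Now `u ∈ K ∙ (u - u')`: `u` is isotropic and `u'` is a multiple of it.
  obtain ⟨c, hc⟩ := exists_eq_smul_of_ker_polar_le
    (separatingLeft_polarBilin_of_forall_exists_polar_eq_one hiso) fun a ha => by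
      rw [polar_comm]; exact hA a ha
  have hc0 : c ≠ 0 := by rintro rfl; exact hu (by simpa using hc)
  have hQu : Q u = 0 := by rw [hc, QuadraticMap.map_smul, hz, smul_zero]
  have hu'u : u' = (1 - c⁻¹) • u := by
    rw [sub_smul, one_smul, ← (eq_inv_smul_iff₀ hc0).mpr hc.symm, sub_sub_cancel]
  obtain ⟨v, hv, huv⟩ := hiso u hu
  rw [hu'u] at hu' ⊢
  exact exists_isometryEquiv_apply_eq_smul hQu hv huv (left_ne_zero_of_smul hu')

theorem exists_ne_zero_map_eq [Nontrivial M]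
    (hiso : ∀ u ≠ 0, ∃ v, Q v = 0 ∧ polar Q u v = 1)
    (c : K) : ∃ w ≠ 0, Q w = c := by
  obtain ⟨u, hu⟩ := exists_ne (0 : M)
  obtain ⟨v, hv, huv⟩ := hiso u hu
  obtain ⟨w, hw, hvw⟩ := hiso v (by rintro rfl; simp at huv)
  refine ⟨c • v + w, fun h0 => ?_, ?_⟩
  · have := congrArg (polar Q v) h0
    simp [polar_add_right, polar_smul_right, polar_self, hv, hvw] at this
  · rw [QuadraticMap.map_add Q, QuadraticMap.map_smul, polar_smul_left, hv, hw, hvw]; simp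

theorem exists_isotropic_add_smul_add_smul [CharP K 2] [PerfectRing K 2] {z z' : M}
    (hzz' : polar Q z z' = 1) (d : M) : ∃ s t : K, Q (d + s • z + t • z') = 0 := by
  obtain ⟨s, t, hst⟩ := CharTwo.exists_binary_quadratic_eq_zero (Q z) (Q z') (polar Q d z)
    (polar Q d z') (Q d)
  refine ⟨s, t, ?_⟩
  rw [map_add_smul, map_add_smul, polar_add_left, polar_smul_left, hzz']
  linear_combination hst

theorem exists_isotropic_polar_eq_one [CharP K 2] [PerfectRing K 2] {u d e e' : M}
    (hud : polar Q u d = 1) (hee' : polar Q e e' = 1) (hed : polar Q e d = 0)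
    (he'd : polar Q e' d = 0) : ∃ v, Q v = 0 ∧ polar Q u v = 1 := by
  -- Shifting `e, e'` along `d` moves them into `uᗮ` without changing their pairing.
  set z := e - polar Q u e • d
  set z' := e' - polar Q u e' • d
  have hzz' : polar Q z z' = 1 := by
    simp only [z, z', polar_sub_left, polar_sub_right, polar_smul_left, polar_smul_right,
      polar_self, hee', hed, polar_comm Q d e', he'd, nsmul_eq_mul, Nat.cast_ofNat,
      CharTwo.two_eq_zero]
    simp
  obtain ⟨s, t, hst⟩ := exists_isotropic_add_smul_add_smul hzz' d
  refine ⟨_, hst, ?_⟩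
  simp only [z, z', polar_add_right, polar_sub_right, polar_smul_right, hud]
  simp

theorem setOf_exists_unit_isometry_apply_eq [CharP K 2]
    (hiso : ∀ u ≠ 0, ∃ v, Q v = 0 ∧ polar Q u v = 1) {u : M} (hu : u ≠ 0) :
    {u' | ∃ g : (M →ₗ[K] M)ˣ,
        (∀ v, Q ((g : M →ₗ[K] M) v) = Q v) ∧ (g : M →ₗ[K] M) u = u'} =
      {w | w ≠ 0 ∧ Q w = Q u} := by
  ext w
  constructor
  · rintro ⟨g, hg, rfl⟩
    exact ⟨(LinearMap.GeneralLinearGroup.toLinearEquiv g).map_ne_zero_iff.mpr hu, hg u⟩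
  · rintro ⟨hw, hQw⟩
    obtain ⟨g, hg⟩ := exists_isometryEquiv_apply_eq hiso hu hw hQw.symm
    exact ⟨LinearMap.GeneralLinearGroup.ofLinearEquiv g.toLinearEquiv, g.map_app, hg⟩

end QuadraticMap

open QuadraticMap

theorem natCard_nonzeroLevelSets {α β : Type*} [Zero α] (Q : α → β)
    (hQ : ∀ c, ∃ w ≠ 0, Q w = c) :
    Nat.card {s : Set α | ∃ u, u ≠ 0 ∧ s = {w | w ≠ 0 ∧ Q w = Q u}} = Nat.card β := by
  have hinj : Function.Injective fun c => {w | w ≠ 0 ∧ Q w = c} := by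
    intro c c' h
    obtain ⟨w, hw, rfl⟩ := hQ c
    exact (Set.ext_iff.mp h w).mp ⟨hw, rfl⟩ |>.2
  convert Nat.card_range_of_injective hinj using 3
  ext s
  constructor
  · rintro ⟨u, -, rfl⟩; exact ⟨Q u, rfl⟩
  · rintro ⟨c, rfl⟩
    obtain ⟨w, hw, rfl⟩ := hQ c
    exact ⟨w, hw, rfl⟩

section Symplectic

variable {f m : ℕ}

theorem B_add_left (u u' w : V f m) : B (u + u') w = B u w + B u' w := by
  simp only [B, Prod.fst_add, Prod.snd_add, Pi.add_apply, ← Finset.sum_add_distrib]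
  exact Finset.sum_congr rfl fun _ _ => by ring

theorem B_smul_left (c : Fq f) (u w : V f m) : B (c • u) w = c * B u w := by
  simp only [B, Prod.smul_fst, Prod.smul_snd, Pi.smul_apply, smul_eq_mul, Finset.mul_sum]
  exact Finset.sum_congr rfl fun _ _ => by ring

theorem polar_eq_B {Q : V f m → Fq f} (hpolar : ∀ u w, Q (u + w) + Q u + Q w = B u w)
    (u w : V f m) : polar Q u w = B u w := by
  rw [polar, CharTwo.sub_eq_add, CharTwo.sub_eq_add, hpolar]

theorem exists_partner_and_orthogonal_hyperbolic_pair (hm : 2 ≤ m) {u : V f m} (hu : u ≠ 0) :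
    ∃ d e e' : V f m, B u d = 1 ∧ B e e' = 1 ∧ B e d = 0 ∧ B e' d = 0 := by
  obtain ⟨j, hj⟩ : ∃ j, u.1 j ≠ 0 ∨ u.2 j ≠ 0 := by
    by_contra! h
    exact hu (Prod.ext (funext fun j => (h j).1) (funext fun j => (h j).2))
  obtain ⟨k, hkj⟩ := Fintype.exists_ne_of_one_lt_card (by rw [Fintype.card_fin]; omega) j
  have hee' : B ((Pi.single k 1, 0) : V f m) (0, Pi.single k 1) = 1 := by
    simp [B, Pi.single_apply]
  rcases hj with hj | hj
  · refine ⟨(0, Pi.single j (u.1 j)⁻¹), _, _, ?_, hee', ?_, ?_⟩ <;>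
      simp [B, Pi.single_apply, hj, hkj.symm]
  · refine ⟨(Pi.single j (u.2 j)⁻¹, 0), _, _, ?_, hee', ?_, ?_⟩ <;>
      simp [B, Pi.single_apply, hj, hkj.symm]

theorem exists_isotropic_polar_eq_one_of_polar_eq_B (hm : 2 ≤ m)
    {Q : QuadraticForm (Fq f) (V f m)} (hQ : ∀ u w, polar Q u w = B u w) {u : V f m}
    (hu : u ≠ 0) :
    ∃ v, Q v = 0 ∧ polar Q u v = 1 := by
  obtain ⟨d, e, e', hud, hee', hed, he'd⟩ := exists_partner_and_orthogonal_hyperbolic_pair hm hu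
  simp only [← hQ] at hud hee' hed he'd
  exact exists_isotropic_polar_eq_one hud hee' hed he'd

end Symplectic

/-- For `m ≥ 2` and any quadratic form `Q` on `V` with polar form `B`, the isometry group
`O(Q) ≤ GL(V)` is transitive on each nonzero level set of `Q`: two nonzero vectors lie in the
same `O(Q)`-orbit iff they have the same value under `Q`; consequently the orbits of `O(Q)` on
`V \ {0}` are exactly the `q` nonzero level sets of `Q` (`q = 2^f`), so there are `q` of them. -/
theorem orthogonal_orbits_on_nonzero_vectors (f m : ℕ) (hf : 1 ≤ f) (hm : 2 ≤ m)
    (Q : V f m → Fq f)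
    (hQ : ∀ c : Fq f, ∀ v : V f m, Q (c • v) = c ^ 2 * Q v)
    (hpolar : ∀ u w : V f m, Q (u + w) + Q u + Q w = B u w) :
    (∀ u u' : V f m, u ≠ 0 → u' ≠ 0 →
      ((∃ g : (V f m →ₗ[Fq f] V f m)ˣ,
          (∀ v : V f m, Q ((g : V f m →ₗ[Fq f] V f m) v) = Q v) ∧
          (g : V f m →ₗ[Fq f] V f m) u = u') ↔ Q u = Q u')) ∧
    (∀ u : V f m, u ≠ 0 →
      {u' | ∃ g : (V f m →ₗ[Fq f] V f m)ˣ,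
          (∀ v : V f m, Q ((g : V f m →ₗ[Fq f] V f m) v) = Q v) ∧
          (g : V f m →ₗ[Fq f] V f m) u = u'} =
        {w : V f m | w ≠ 0 ∧ Q w = Q u}) ∧
    Nat.card {s : Set (V f m) | ∃ u : V f m, u ≠ 0 ∧
      s = {u' | ∃ g : (V f m →ₗ[Fq f] V f m)ˣ,
        (∀ v : V f m, Q ((g : V f m →ₗ[Fq f] V f m) v) = Q v) ∧
        (g : V f m →ₗ[Fq f] V f m) u = u'}} = 2 ^ f := by
  obtain ⟨Q, rfl⟩ : ∃ Q' : QuadraticForm (Fq f) (V f m), ⇑Q' = Q :=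
    ⟨ofPolar Q (fun c v => by rw [hQ, smul_eq_mul, _root_.sq])
      (fun x x' y => by simp only [polar_eq_B hpolar, B_add_left])
      (fun c x y => by simp only [polar_eq_B hpolar, B_smul_left, smul_eq_mul]), rfl⟩
  have hiso : ∀ u ≠ 0, ∃ v, Q v = 0 ∧ polar Q u v = 1 :=
    fun u hu => exists_isotropic_polar_eq_one_of_polar_eq_B hm (polar_eq_B hpolar) hu
  have horbit := fun u (hu : u ≠ 0) => setOf_exists_unit_isometry_apply_eq hiso hu
  refine ⟨fun u u' hu hu' => ?_, horbit, ?_⟩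
  · simpa [hu', eq_comm] using Set.ext_iff.mp (horbit u hu) u'
  · have : Nonempty (Fin m) := ⟨⟨0, by omega⟩⟩
    calc _ = Nat.card {s : Set (V f m) | ∃ u, u ≠ 0 ∧ s = {w | w ≠ 0 ∧ Q w = Q u}} := by
          congr! 4 with s
          refine exists_congr fun u => and_congr_right fun hu => ?_
          rw [horbit u hu]
      _ = Nat.card (Fq f) := natCard_nonzeroLevelSets Q (exists_ne_zero_map_eq hiso)
      _ = 2 ^ f := GaloisField.card 2 f (by omega)
end
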